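/- Let V be a monoidal additive category, (A, m, i) a monoid object in V, and (M, μ, ν) an A-bimodule equipped with a morphism d : A → M satisfying the Leibniz rule. Then the following are equivalent: (i) 1_A·d := μ ∘ (1_A ⊗ d) : A ⊗ A → M is an epimorphism in V; (ii) d·1_A := ν ∘ (d ⊗ 1_A) : A ⊗ A → M is an epimorphism in V; (iii) the morphism 1_A·d·1_A : (A ⊗ A) ⊗ A → M, given (suppressing associators) by μ ∘ (1_A ⊗ (ν ∘ (d ⊗ 1_A))), is an epimorphism in V. -/

import Mathlib

/-!
Inserting the unit of `A` on the left (on the right) recovers `d` from `1·d` (from `d·1`). So a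
morphism killing `d·1` kills `d`, hence `d ∘ m = d·1 + 1·d`, hence `1·d`; and symmetrically.
Inserting the unit on the left also recovers `d·1` from `1·d·1`. Conversely, the Leibniz rule and
associativity of the left action give `a·d(b)·c = a·d(bc) - ab·d(c)`, so `1·d·1` factors
through `1·d`.
-/

open CategoryTheory MonoidalCategory Limits

universe v u

variable {V : Type u} [Category.{v} V] [MonoidalCategory V]
variable [Preadditive V] [MonoidalPreadditive V] [HasFiniteBiproducts V]

namespace CategoryTheory

theorem Preadditive.epi_of_comp_eq_add_of_fac {C : Type*} [Category C] [Preadditive C]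
    {W X Y : C} {d : W ⟶ Y} {f g : X ⟶ Y} (m : X ⟶ W) (s : W ⟶ X)
    (hsum : m ≫ d = f + g) (hfac : s ≫ g = d) [Epi f] : Epi g := by
  refine epi_of_cancel_zero g fun u hgu => ?_
  have hdu : d ≫ u = 0 := by rw [← hfac, Category.assoc, hgu, comp_zero]
  have hfu : f ≫ u = 0 := by
    rw [← add_sub_cancel_right f g, ← hsum, Preadditive.sub_comp, Category.assoc, hdu, hgu,
      comp_zero, sub_zero]
  exact zero_of_epi_comp f hfu

namespace Bimod

section Monoidal

variable {C : Type*} [Category C] [MonoidalCategory C] {A B : Mon C} (M : Bimod A B)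

def oneDot {Y : C} (k : Y ⟶ M.X) : A.X ⊗ Y ⟶ M.X :=
  (A.X ◁ k) ≫ M.actLeft

def dotOne {Y : C} (k : Y ⟶ M.X) : Y ⊗ B.X ⟶ M.X :=
  (k ▷ B.X) ≫ M.actRight

variable {M}

theorem leftUnitor_inv_comp_one_whiskerRight_oneDot {Y : C} (k : Y ⟶ M.X) :
    ((λ_ Y).inv ≫ (A.mon.one ▷ Y)) ≫ M.oneDot k = k := by
  rw [Category.assoc, oneDot, ← whisker_exchange_assoc, M.one_actLeft]
  simp

theorem rightUnitor_inv_comp_whiskerLeft_one_dotOne {Y : C} (k : Y ⟶ M.X) :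
    ((ρ_ Y).inv ≫ (Y ◁ B.mon.one)) ≫ M.dotOne k = k := by
  rw [Category.assoc, dotOne, whisker_exchange_assoc, M.actRight_one]
  simp

theorem epi_associator_hom_comp_oneDot {Y Z : C} (k : Y ⊗ Z ⟶ M.X) [Epi k] :
    Epi ((α_ A.X Y Z).hom ≫ M.oneDot k) :=
  epi_of_epi_fac (f := (λ_ _).inv ≫ (A.mon.one ▷ (Y ⊗ Z)) ≫ (α_ _ _ _).inv) (h := k) <| by
    rw [Category.assoc, Category.assoc, Iso.inv_hom_id_assoc, ← Category.assoc,
      leftUnitor_inv_comp_one_whiskerRight_oneDot]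

theorem oneDot_comp {Y Z : C} (f : Z ⟶ Y) (k : Y ⟶ M.X) :
    M.oneDot (f ≫ k) = (A.X ◁ f) ≫ M.oneDot k := by
  simp only [oneDot, MonoidalCategory.whiskerLeft_comp, Category.assoc]

theorem oneDot_oneDot {Y : C} (k : Y ⟶ M.X) :
    M.oneDot (M.oneDot k) = (α_ A.X A.X Y).inv ≫ (A.mon.mul ▷ Y) ≫ M.oneDot k := by
  simp only [oneDot]
  rw [← whisker_exchange_assoc, M.left_assoc, ← associator_inv_naturality_right_assoc,
    Iso.inv_hom_id_assoc, MonoidalCategory.whiskerLeft_comp, Category.assoc]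

end Monoidal

section Preadditive

variable {C : Type*} [Category C] [MonoidalCategory C] [Preadditive C] {A : Mon C} {M : Bimod A A}

variable (M) in
def IsDerivation (d : A.X ⟶ M.X) : Prop :=
  A.mon.mul ≫ d = M.dotOne d + M.oneDot d

namespace IsDerivation

variable {d : A.X ⟶ M.X}

theorem epi_dotOne (hd : M.IsDerivation d) [Epi (M.oneDot d)] : Epi (M.dotOne d) :=
  Preadditive.epi_of_comp_eq_add_of_fac A.mon.mul _ (by rw [hd, add_comm])
    (rightUnitor_inv_comp_whiskerLeft_one_dotOne d)

theorem epi_oneDot (hd : M.IsDerivation d) [Epi (M.dotOne d)] : Epi (M.oneDot d) :=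
  Preadditive.epi_of_comp_eq_add_of_fac A.mon.mul _ hd
    (leftUnitor_inv_comp_one_whiskerRight_oneDot d)

variable [MonoidalPreadditive C]

theorem associator_hom_comp_oneDot_dotOne (hd : M.IsDerivation d) :
    (α_ A.X A.X A.X).hom ≫ M.oneDot (M.dotOne d) =
      ((α_ A.X A.X A.X).hom ≫ (A.X ◁ A.mon.mul) - (A.mon.mul ▷ A.X)) ≫ M.oneDot d := by
  have hsplit : M.oneDot (A.mon.mul ≫ d) = M.oneDot (M.dotOne d) + M.oneDot (M.oneDot d) := by
    rw [hd]
    simp only [oneDot, MonoidalPreadditive.whiskerLeft_add, Preadditive.add_comp]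
  rw [oneDot_comp, oneDot_oneDot] at hsplit
  rw [Preadditive.sub_comp, Category.assoc, hsplit, Preadditive.comp_add,
    Iso.hom_inv_id_assoc, add_sub_cancel_right]

end IsDerivation

end Preadditive

end Bimod

end CategoryTheory

/-- **Statement 7.** -/
theorem epi_oneDotD_iff_epi_dDotOne_iff_epi_oneDotDDotOne
    (A : Mon V) (M : Bimod A A) (d : A.X ⟶ M.X)
    (leibniz : A.mon.mul ≫ d = (d ▷ A.X) ≫ M.actRight + (A.X ◁ d) ≫ M.actLeft) :
    List.TFAE
      [Epi ((A.X ◁ d) ≫ M.actLeft),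
       Epi ((d ▷ A.X) ≫ M.actRight),
       Epi ((α_ A.X A.X A.X).hom ≫ (A.X ◁ ((d ▷ A.X) ≫ M.actRight)) ≫ M.actLeft)] := by
  have hd : M.IsDerivation d := leibniz
  tfae_have 1 → 2 := fun (_ : Epi (M.oneDot d)) => hd.epi_dotOne
  tfae_have 2 → 1 := fun (_ : Epi (M.dotOne d)) => hd.epi_oneDot
  tfae_have 2 → 3 := fun (_ : Epi (M.dotOne d)) =>
    Bimod.epi_associator_hom_comp_oneDot (M.dotOne d)
  tfae_have 3 → 1 := fun (_ : Epi ((α_ A.X A.X A.X).hom ≫ M.oneDot (M.dotOne d))) =>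
    epi_of_epi_fac hd.associator_hom_comp_oneDot_dotOne.symm
  tfae_finish
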